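/- arXiv:2510.07699 — 2 statements merged into one kernel-verified Lean document; each statement's English description precedes it below -/
import Mathlib

section
/- Jordan's lemma: for any two orthogonal projectors P and Q on a finite-dimensional complex Hilbert space H, there is an orthogonal decomposition of H into subspaces of dimension at most 2, each invariant under both P and Q, such that on each two-dimensional subspace both P and Q restrict to rank-one projectors. -/
/-!
Induct on the dimension of a subspace `W` invariant under both projections. If `P` vanishes
on `W`, an eigenvector of `Q` in `W` spans a one-dimensional block. Otherwise `PQ` preserves
`W ⊓ range P`, and an eigenvector `x` of it there satisfies `P x = x` and `P (Q x) ∈ ℂ ∙ x`;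
hence `span {x, Q x}` is invariant under `P` and `Q`, which map it onto `ℂ ∙ x` and `ℂ ∙ Q x`.
As `P` and `Q` are self-adjoint, the orthogonal complement of this block inside `W` is again
invariant, and of smaller dimension.
-/

open scoped InnerProductSpace

open Module Submodule

section Blocks

variable {K V : Type*} [Field K] [AddCommGroup V] [Module K V]

theorem Submodule.map_span_singleton (f : V →ₗ[K] V) (x : V) : (K ∙ x).map f = K ∙ f x := by
  rw [map_span, Set.image_singleton]

theorem Submodule.finrank_span_singleton_le_one (x : V) : finrank K (K ∙ x) ≤ 1 := by
  simpa using finrank_span_le_card ({x} : Set V)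

theorem Module.End.span_singleton_mem_invtSubmodule_iff {f : End K V} {x : V} :
    K ∙ x ∈ f.invtSubmodule ↔ f x ∈ K ∙ x := by
  rw [mem_invtSubmodule_iff_map_le, map_span_singleton, span_singleton_le_iff_mem]

/-- A block in the sense of Jordan's lemma on two projections (not a block of the Jordan
normal form). -/
structure IsJordanBlock (P Q : End K V) (B : Submodule K V) : Prop where
  finrank_le_two : finrank K B ≤ 2
  mem_invtSubmodule_left : B ∈ P.invtSubmodule
  mem_invtSubmodule_right : B ∈ Q.invtSubmodule
  finrank_map_eq_one : finrank K B = 2 → finrank K (B.map P) = 1 ∧ finrank K (B.map Q) = 1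

variable {P Q : End K V} {x : V}

theorem isJordanBlock_span_singleton (hPx : P x ∈ K ∙ x) (hQx : Q x ∈ K ∙ x) :
    IsJordanBlock P Q (K ∙ x) where
  finrank_le_two := (finrank_span_singleton_le_one (K := K) x).trans one_le_two
  mem_invtSubmodule_left := End.span_singleton_mem_invtSubmodule_iff.mpr hPx
  mem_invtSubmodule_right := End.span_singleton_mem_invtSubmodule_iff.mpr hQx
  finrank_map_eq_one h := by have := finrank_span_singleton_le_one (K := K) x; omega

theorem isJordanBlock_span_pair (hQ : IsIdempotentElem Q) (hPx : P x = x)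
    (hPQx : P (Q x) ∈ K ∙ x) : IsJordanBlock P Q (K ∙ x ⊔ K ∙ Q x) := by
  have hP_map : (K ∙ x ⊔ K ∙ Q x).map P = K ∙ x := by
    rw [Submodule.map_sup, map_span_singleton, map_span_singleton, hPx, sup_eq_left,
      span_singleton_le_iff_mem]
    exact hPQx
  have hQ_map : (K ∙ x ⊔ K ∙ Q x).map Q = K ∙ Q x := by
    rw [Submodule.map_sup, map_span_singleton, map_span_singleton, ← End.mul_apply, hQ.eq, sup_idem]
  have hx := finrank_span_singleton_le_one (K := K) x
  have hQx := finrank_span_singleton_le_one (K := K) (Q x)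
  have hsup := finrank_add_le_finrank_add_finrank (K ∙ x) (K ∙ Q x)
  refine ⟨by omega, ?_, ?_, fun h => ?_⟩
  · rw [End.mem_invtSubmodule_iff_map_le, hP_map]
    exact le_sup_left
  · rw [End.mem_invtSubmodule_iff_map_le, hQ_map]
    exact le_sup_right
  · rw [hP_map, hQ_map]
    omega

theorem Module.End.exists_hasEigenvector_mem_of_mem_invtSubmodule [IsAlgClosed K]
    [FiniteDimensional K V] {f : End K V} {W : Submodule K V} (hW : W ≠ ⊥)
    (hWf : W ∈ f.invtSubmodule) : ∃ x ∈ W, ∃ μ, f.HasEigenvector μ x := by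
  have : Nontrivial W := nontrivial_iff_ne_bot.mpr hW
  obtain ⟨μ, hμ⟩ := End.exists_eigenvalue (f.restrict hWf)
  obtain ⟨y, hy⟩ := hμ.exists_hasEigenvector
  exact ⟨y, y.2, μ, f.eigenspace_restrict_le_eigenspace hWf μ ⟨y, hy.1, rfl⟩,
    by simpa using hy.2⟩

theorem exists_isJordanBlock_le [IsAlgClosed K] [FiniteDimensional K V]
    (hP : IsIdempotentElem P) (hQ : IsIdempotentElem Q) {W : Submodule K V} (hW : W ≠ ⊥)
    (hWP : W ∈ P.invtSubmodule) (hWQ : W ∈ Q.invtSubmodule) :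
    ∃ B ≤ W, B ≠ ⊥ ∧ IsJordanBlock P Q B := by
  by_cases hWP_bot : W ⊓ LinearMap.range P = ⊥
  · obtain ⟨x, hxW, μ, hx⟩ := End.exists_hasEigenvector_mem_of_mem_invtSubmodule hW hWQ
    have hPx : P x = 0 := by
      rw [← mem_bot K, ← hWP_bot]
      exact ⟨hWP hxW, LinearMap.mem_range_self P x⟩
    refine ⟨K ∙ x, (span_singleton_le_iff_mem _ _).mpr hxW, by simpa using hx.2,
      isJordanBlock_span_singleton (by simp [hPx]) ?_⟩
    rw [hx.apply_eq_smul]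
    exact smul_mem _ _ (mem_span_singleton_self x)
  · have hinv : W ⊓ LinearMap.range P ∈ (P * Q).invtSubmodule := fun y hy =>
      ⟨hWP (hWQ hy.1), LinearMap.mem_range_self P (Q y)⟩
    obtain ⟨x, ⟨hxW, hxP⟩, μ, hx⟩ :=
      End.exists_hasEigenvector_mem_of_mem_invtSubmodule hWP_bot hinv
    refine ⟨K ∙ x ⊔ K ∙ Q x, sup_le ((span_singleton_le_iff_mem _ _).mpr hxW)
      ((span_singleton_le_iff_mem _ _).mpr (hWQ hxW)), ?_,
      isJordanBlock_span_pair hQ ((LinearMap.IsIdempotentElem.mem_range_iff hP).mp hxP) ?_⟩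
    · exact (Submodule.ne_bot_iff _).mpr ⟨x, mem_sup_left (mem_span_singleton_self x), hx.2⟩
    · rw [← End.mul_apply, hx.apply_eq_smul]
      exact smul_mem _ _ (mem_span_singleton_self x)

end Blocks

section Orthogonal

variable {H : Type*} [NormedAddCommGroup H] [InnerProductSpace ℂ H] [FiniteDimensional ℂ H]
  {P Q : End ℂ H}

theorem exists_orthogonal_isJordanBlock_decomposition (hPs : P.IsSymmetric)
    (hPi : IsIdempotentElem P) (hQs : Q.IsSymmetric) (hQi : IsIdempotentElem Q)
    (W : Submodule ℂ H) (hWP : W ∈ P.invtSubmodule) (hWQ : W ∈ Q.invtSubmodule) :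
    ∃ (ι : Type) (_ : Fintype ι) (B : ι → Submodule ℂ H),
      Pairwise (fun i j => B i ⟂ B j) ∧ ⨆ i, B i = W ∧ ∀ i, IsJordanBlock P Q (B i) := by
  induction hn : finrank ℂ W using Nat.strong_induction_on generalizing W with
  | _ n ih =>
    rcases eq_or_ne W ⊥ with rfl | hW
    · exact ⟨Empty, inferInstance, Empty.elim, fun i => i.elim, by simp, fun i => i.elim⟩
    obtain ⟨B, hBW, hB0, hB⟩ := exists_isJordanBlock_le hPi hQi hW hWP hWQ
    have hlt : finrank ℂ ↥(Bᗮ ⊓ W) < n := by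
      have hsum := finrank_add_inf_finrank_orthogonal hBW
      have hpos : 0 < finrank ℂ B := finrank_pos_iff.mpr (nontrivial_iff_ne_bot.mpr hB0)
      omega
    obtain ⟨ι, _, C, hC_orth, hC_sup, hC⟩ := ih _ hlt (Bᗮ ⊓ W)
      (End.invtSubmodule.inf_mem (hPs.orthogonalComplement_mem_invtSubmodule
        hB.mem_invtSubmodule_left) hWP)
      (End.invtSubmodule.inf_mem (hQs.orthogonalComplement_mem_invtSubmodule
        hB.mem_invtSubmodule_right) hWQ) rfl
    have hB_orth : ∀ i, B ⟂ C i := fun i =>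
      isOrtho_iff_le.mpr (((le_iSup C i).trans hC_sup.le).trans inf_le_left) |>.symm
    refine ⟨Option ι, inferInstance, fun o => o.elim B C, ?_, ?_, ?_⟩
    · rintro (_ | i) (_ | j) hij
      · exact absurd rfl hij
      · exact hB_orth j
      · exact (hB_orth i).symm
      · exact hC_orth (Option.some_injective _ |>.ne_iff.mp hij)
    · rw [iSup_option]
      simpa [hC_sup] using sup_orthogonal_inf_of_hasOrthogonalProjection hBW
    · rintro (_ | i)
      exacts [hB, hC i]

end Orthogonal

/-- **Jordan's lemma.** Any two orthogonal projectors `P`, `Q` on a finite-dimensional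
complex Hilbert space admit an orthogonal decomposition of the space into subspaces of
dimension at most 2, each invariant under both `P` and `Q`, such that on each
two-dimensional subspace both `P` and `Q` restrict to rank-one projectors. -/
theorem jordans_lemma {H : Type*} [NormedAddCommGroup H] [InnerProductSpace ℂ H]
    [FiniteDimensional ℂ H] (P Q : H →ₗ[ℂ] H)
    (hPadj : LinearMap.adjoint P = P) (hPidem : P ∘ₗ P = P)
    (hQadj : LinearMap.adjoint Q = Q) (hQidem : Q ∘ₗ Q = Q) :
    ∃ (ι : Type) (_ : Fintype ι) (B : ι → Submodule ℂ H),
      (∀ i j, i ≠ j → ∀ x ∈ B i, ∀ y ∈ B j, ⟪x, y⟫_ℂ = 0)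
      ∧ (⨆ i, B i) = ⊤
      ∧ (∀ i, Module.finrank ℂ (B i) ≤ 2)
      ∧ (∀ i, (B i).map P ≤ B i)
      ∧ (∀ i, (B i).map Q ≤ B i)
      ∧ (∀ i, Module.finrank ℂ (B i) = 2 →
          Module.finrank ℂ ((B i).map P) = 1 ∧ Module.finrank ℂ ((B i).map Q) = 1) := by
  obtain ⟨ι, _, B, h_orth, h_sup, hB⟩ := exists_orthogonal_isJordanBlock_decomposition
    ((LinearMap.isSymmetric_iff_isSelfAdjoint P).mpr hPadj) hPidem
    ((LinearMap.isSymmetric_iff_isSelfAdjoint Q).mpr hQadj) hQidem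
    ⊤ (End.invtSubmodule.top_mem P) (End.invtSubmodule.top_mem Q)
  exact ⟨ι, inferInstance, B, fun i j hij => isOrtho_iff_inner_eq.mp (h_orth hij), h_sup,
    fun i => (hB i).finrank_le_two,
    fun i => (End.mem_invtSubmodule_iff_map_le P).mp (hB i).mem_invtSubmodule_left,
    fun i => (End.mem_invtSubmodule_iff_map_le Q).mp (hB i).mem_invtSubmodule_right,
    fun i => (hB i).finrank_map_eq_one⟩
end

section
/- Suppose orthogonal projectors B₁, B₂ ≤ P (acting on the support of P, of dimension r) satisfy: for every unit vector u ∈ supp(P) with B₁u = 0 one has ⟨u|B₂|u⟩ ≥ 0.9. Then B₁ + B₂ has rank equal to rank(P), and in any Jordan 2×2 block of (B₁,B₂) with B₁|_B = |w₁⟩⟨w₁| and B₂|_B = |w₂⟩⟨w₂|, the overlap satisfies |⟨w₁|w₂⟩|² ≤ 0.1. -/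
/-! A vector `u` in the support of `P` with `(B₁ + B₂) u = 0` satisfies
`0 = ⟨u|(B₁ + B₂)|u⟩ = ‖B₁ u‖² + ‖B₂ u‖²`, so it is killed by both projectors, and the covering
hypothesis forces `u = 0`. Hence `B₁ + B₂`, which factors through `P`, is injective on the support
of `P`, and the ranks agree.

In a Jordan block `B`, a unit vector `u ∈ B` orthogonal to `w₁` is killed by `B₁`, so
`|⟨u|w₂⟩|² = ⟨u|B₂|u⟩ ≥ 0.9`; Bessel's inequality for the orthonormal pair `w₁, u` then gives
`|⟨w₁|w₂⟩|² ≤ 1 - 0.9`. -/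

open scoped InnerProductSpace
open LinearMap Module

section

variable {𝕜 E : Type*} [RCLike 𝕜] [NormedAddCommGroup E] [InnerProductSpace 𝕜 E]

theorem LinearMap.isSymmetricProjection_of_adjoint_eq [FiniteDimensional 𝕜 E] {T : E →ₗ[𝕜] E}
    (hadj : adjoint T = T) (hidem : T ∘ₗ T = T) : T.IsSymmetricProjection :=
  ⟨hidem, (isSymmetric_iff_isSelfAdjoint T).mpr hadj⟩

theorem LinearMap.IsSymmetricProjection.re_inner_apply_self {T : E →ₗ[𝕜] E}
    (hT : T.IsSymmetricProjection) (x : E) : RCLike.re ⟪x, T x⟫_𝕜 = ‖T x‖ ^ 2 := by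
  conv_lhs => rw [← hT.isIdempotentElem, Module.End.mul_apply, ← hT.isSymmetric]
  exact inner_self_eq_norm_sq _

theorem LinearMap.IsSymmetricProjection.apply_eq_zero_of_add_apply_eq_zero
    {S T : E →ₗ[𝕜] E} (hS : S.IsSymmetricProjection) (hT : T.IsSymmetricProjection) {x : E}
    (hx : (S + T) x = 0) : S x = 0 ∧ T x = 0 := by
  have h : ‖S x‖ ^ 2 + ‖T x‖ ^ 2 = 0 := by
    rw [← hS.re_inner_apply_self, ← hT.re_inner_apply_self, ← map_add, ← inner_add_right,
      ← add_apply, hx, inner_zero_right, map_zero]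
  obtain ⟨hS0, hT0⟩ := (add_eq_zero_iff_of_nonneg (sq_nonneg _) (sq_nonneg _)).mp h
  exact ⟨by simpa using hS0, by simpa using hT0⟩

theorem Submodule.exists_norm_eq_one_inner_eq_zero {K : Submodule 𝕜 E} [FiniteDimensional 𝕜 K]
    (hK : 1 < finrank 𝕜 K) {w : E} (hw : w ∈ K) : ∃ u ∈ K, ‖u‖ = 1 ∧ ⟪w, u⟫_𝕜 = 0 := by
  have hle : 𝕜 ∙ w ≤ K := (Submodule.span_singleton_le_iff_mem _ _).mpr hw
  have hpos : 0 < finrank 𝕜 ((𝕜 ∙ w)ᗮ ⊓ K : Submodule 𝕜 E) := by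
    have := Submodule.finrank_add_inf_finrank_orthogonal hle
    have : finrank 𝕜 (𝕜 ∙ w) ≤ 1 := by simpa using finrank_span_le_card (R := 𝕜) ({w} : Set E)
    omega
  obtain ⟨x, ⟨hxw, hxK⟩, hx0⟩ :=
    Submodule.exists_mem_ne_zero_of_ne_bot (Submodule.one_le_finrank_iff.mp hpos)
  exact ⟨(‖x‖⁻¹ : 𝕜) • x, K.smul_mem _ hxK, norm_smul_inv_norm hx0,
    by rw [inner_smul_right, Submodule.mem_orthogonal_singleton_iff_inner_right.mp hxw, mul_zero]⟩

theorem norm_inner_sq_add_norm_inner_sq_le {e₁ e₂ : E} (he₁ : ‖e₁‖ = 1) (he₂ : ‖e₂‖ = 1)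
    (h : ⟪e₁, e₂⟫_𝕜 = 0) (x : E) : ‖⟪e₁, x⟫_𝕜‖ ^ 2 + ‖⟪e₂, x⟫_𝕜‖ ^ 2 ≤ ‖x‖ ^ 2 := by
  have hon : Orthonormal 𝕜 ![e₁, e₂] := by
    rw [orthonormal_iff_ite]
    intro i j
    fin_cases i <;> fin_cases j <;>
      simp [h, ← inner_conj_symm e₂ e₁, inner_self_eq_norm_sq_to_K, he₁, he₂]
  simpa [Fin.sum_univ_two] using hon.sum_inner_products_le (s := Finset.univ) x

theorem re_inner_inner_smul_right (u w : E) : RCLike.re ⟪u, ⟪w, u⟫_𝕜 • w⟫_𝕜 = ‖⟪u, w⟫_𝕜‖ ^ 2 := by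
  rw [inner_smul_right, ← inner_conj_symm, mul_comm, RCLike.mul_conj]
  norm_cast

end

theorem Submodule.finrank_map_eq_of_disjoint_ker {R M N : Type*} [Ring R] [AddCommGroup M]
    [Module R M] [AddCommGroup N] [Module R N] (f : M →ₗ[R] N) {L : Submodule R M}
    (h : Disjoint L (ker f)) : finrank R (L.map f) = finrank R L := by
  rw [← range_domRestrict]
  exact (LinearEquiv.ofInjective _ (injective_domRestrict_iff.mpr h)).finrank_eq.symm

theorem LinearMap.finrank_range_eq_of_comp_eq_of_disjoint_ker {R M N : Type*} [Ring R]
    [AddCommGroup M] [Module R M] [AddCommGroup N] [Module R N] {P : M →ₗ[R] M} {A : M →ₗ[R] N}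
    (hAP : A ∘ₗ P = A) (h : Disjoint (range P) (ker A)) :
    finrank R (range A) = finrank R (range P) := by
  rw [← hAP, range_comp, Submodule.finrank_map_eq_of_disjoint_ker A h]

theorem robust_covering_general {H : Type*} [NormedAddCommGroup H] [InnerProductSpace ℂ H]
    [FiniteDimensional ℂ H] (P B₁ B₂ : H →ₗ[ℂ] H)
    (hPidem : P ∘ₗ P = P)
    (hB₁adj : LinearMap.adjoint B₁ = B₁) (hB₁idem : B₁ ∘ₗ B₁ = B₁)
    (hB₂adj : LinearMap.adjoint B₂ = B₂) (hB₂idem : B₂ ∘ₗ B₂ = B₂)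
    (hPB₁ : B₁ ∘ₗ P = B₁) (hPB₂ : B₂ ∘ₗ P = B₂)
    (hcover : ∀ u : H, P u = u → ‖u‖ = 1 → B₁ u = 0 → 0.9 ≤ (⟪u, B₂ u⟫_ℂ).re) :
    Module.finrank ℂ (LinearMap.range (B₁ + B₂)) = Module.finrank ℂ (LinearMap.range P)
    ∧ ∀ (B : Submodule ℂ H) (w₁ w₂ : H),
        Module.finrank ℂ B = 2 → (∀ x ∈ B, P x = x) →
        w₁ ∈ B → w₂ ∈ B → ‖w₁‖ = 1 → ‖w₂‖ = 1 →
        (∀ x ∈ B, B₁ x = ⟪w₁, x⟫_ℂ • w₁) →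
        (∀ x ∈ B, B₂ x = ⟪w₂, x⟫_ℂ • w₂) →
        ‖⟪w₁, w₂⟫_ℂ‖ ^ 2 ≤ 0.1 := by
  have hP : IsIdempotentElem P := hPidem
  have hB₁ := isSymmetricProjection_of_adjoint_eq hB₁adj hB₁idem
  have hB₂ := isSymmetricProjection_of_adjoint_eq hB₂adj hB₂idem
  refine ⟨finrank_range_eq_of_comp_eq_of_disjoint_ker (by rw [add_comp, hPB₁, hPB₂]) ?_, ?_⟩
  · refine Submodule.disjoint_def.mpr fun u hu hAu => by_contra fun hu0 => ?_
    obtain ⟨hB₁u, hB₂u⟩ := hB₁.apply_eq_zero_of_add_apply_eq_zero hB₂ hAu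
    have := hcover ((‖u‖⁻¹ : ℂ) • u) (by rw [map_smul, hP.mem_range_iff.mp hu])
      (norm_smul_inv_norm hu0) (by rw [map_smul, hB₁u, smul_zero])
    rw [map_smul, hB₂u, smul_zero, inner_zero_right, Complex.zero_re] at this
    norm_num at this
  · intro B w₁ w₂ hB hPB hw₁ _ hw₁n hw₂n hB₁B hB₂B
    obtain ⟨u, huB, hun, hw₁u⟩ := Submodule.exists_norm_eq_one_inner_eq_zero (by omega) hw₁
    have hB₁u : B₁ u = 0 := by rw [hB₁B u huB, hw₁u, zero_smul]
    have h09 := hcover u (hPB u huB) hun hB₁u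
    rw [hB₂B u huB, ← RCLike.re_to_complex, re_inner_inner_smul_right] at h09
    have hbessel := norm_inner_sq_add_norm_inner_sq_le hw₁n hun hw₁u w₂
    rw [hw₂n] at hbessel
    norm_num at h09 hbessel ⊢
    linarith

/-- If subprojectors `B₁, B₂` of a projector `P` (on a finite-dimensional complex Hilbert
space) satisfy: every unit vector `u` in the support of `P` with `B₁ u = 0` has
`⟨u|B₂|u⟩ ≥ 0.9`, then `B₁ + B₂` has the same rank as `P`, and in any Jordan `2 × 2`
block of `(B₁, B₂)` inside the support of `P`, with `B₁|_B = |w₁⟩⟨w₁|` and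
`B₂|_B = |w₂⟩⟨w₂|`, the overlap satisfies `|⟨w₁|w₂⟩|² ≤ 0.1`. -/
theorem robust_covering {H : Type*} [NormedAddCommGroup H] [InnerProductSpace ℂ H]
    [FiniteDimensional ℂ H] (P B₁ B₂ : H →ₗ[ℂ] H)
    (hPadj : LinearMap.adjoint P = P) (hPidem : P ∘ₗ P = P)
    (hB₁adj : LinearMap.adjoint B₁ = B₁) (hB₁idem : B₁ ∘ₗ B₁ = B₁)
    (hB₂adj : LinearMap.adjoint B₂ = B₂) (hB₂idem : B₂ ∘ₗ B₂ = B₂)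
    (hB₁P : P ∘ₗ B₁ = B₁) (hPB₁ : B₁ ∘ₗ P = B₁)
    (hB₂P : P ∘ₗ B₂ = B₂) (hPB₂ : B₂ ∘ₗ P = B₂)
    (hcover : ∀ u : H, P u = u → ‖u‖ = 1 → B₁ u = 0 → 0.9 ≤ (⟪u, B₂ u⟫_ℂ).re) :
    Module.finrank ℂ (LinearMap.range (B₁ + B₂)) = Module.finrank ℂ (LinearMap.range P)
    ∧ ∀ (B : Submodule ℂ H) (w₁ w₂ : H),
        Module.finrank ℂ B = 2 → (∀ x ∈ B, P x = x) →
        w₁ ∈ B → w₂ ∈ B → ‖w₁‖ = 1 → ‖w₂‖ = 1 →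
        (∀ x ∈ B, B₁ x = ⟪w₁, x⟫_ℂ • w₁) →
        (∀ x ∈ B, B₂ x = ⟪w₂, x⟫_ℂ • w₂) →
        ‖⟪w₁, w₂⟫_ℂ‖ ^ 2 ≤ 0.1 :=
  robust_covering_general P B₁ B₂ hPidem hB₁adj hB₁idem hB₂adj hB₂idem hPB₁ hPB₂ hcover
end
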